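/- The datagram FEP construction satisfies Message Delivery: for every key k output by Gen, every message m ∈ M_ℓin ∪ {⊤}, every integer p, and every choice of the random nonce and random bytes used by Send, if Send(k, m, p) outputs a ciphertext c ≠ ⊥, then Recv(k, c) outputs exactly m (and, since the construction is stateless, every subsequent Recv call on c also outputs m). -/

import Mathlib

/-! Byte strings -/

abbrev Byte := Fin 256
abbrev Bytes := List Byte

def byte (n : ℕ) : Byte := ⟨n % 256, Nat.mod_lt n (by norm_num)⟩
def b0 : Byte := byte 0
def b1 : Byte := byte 1

/-- Two-byte (big-endian) encoding of a natural number. -/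
def enc2 (n : ℕ) : Bytes := [byte (n / 256), byte n]

/-- Decode the first two bytes of a byte string as a big-endian natural number. -/
def dec2 : Bytes → ℕ
  | a :: b :: _ => 256 * a.val + b.val
  | _ => 0

/-- A nonce-based AEAD scheme on byte strings where `Enc` carries the
`ℓ_Nonce`-byte nonce as a prefix of the ciphertext and `Dec` reads the nonce
from its input, with perfect correctness, length additivity (overhead
`ℓ_Nonce + ℓ_Tag`), and soundness of decryption. -/
structure DAEAD where
  Key : Type
  lNonce : ℕ
  lTag : ℕ
  Enc : Key → Bytes → Bytes → Bytes
  Dec : Key → Bytes → Option Bytes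
  correct : ∀ k n m, n.length = lNonce → Dec k (Enc k n m) = some m
  lenAdd : ∀ k n m, n.length = lNonce → (Enc k n m).length = m.length + (lNonce + lTag)
  decSound : ∀ k c m, Dec k c = some m → ∃ n, n.length = lNonce ∧ c = Enc k n m

/-- `ℓ_Overhead = ℓ_Nonce + ℓ_Tag`. -/
def DAEAD.lOver (A : DAEAD) : ℕ := A.lNonce + A.lTag
/-- `ℓ_out = 65507`, the maximum size of a UDP payload. -/
def lOut : ℕ := 65507
/-- `ℓ_in = ℓ_out − ℓ_Overhead − 3`, the maximum input message length. -/
def lIn (A : DAEAD) : ℕ := lOut - A.lOver - 3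
/-- `ℓ_null = 1 + ℓ_Overhead`, the length of a ciphertext of the null message. -/
def lNull (A : DAEAD) : ℕ := 1 + A.lOver

/-- `Rand(p)`: `p` bytes read off a random tape `T`. -/
def rand (T : ℕ → Byte) (p : ℕ) : Bytes := (List.range p).map T

/-- A datagram `Send` input message: `none` is the null message `⊤`, and
`some msg` is an ordinary message `msg ∈ M_ℓin` (when `|msg| ≤ ℓ_in`). -/
abbrev DMsg := Option Bytes

/-- A datagram `Recv` output: a message, the null message `⊤`, or the error `⊥`. -/
inductive DOut where
  | msg (m : Bytes)
  | top
  | bot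
deriving DecidableEq

/-- `Send(k, m, p)` of the datagram FEP construction, using the fresh random
nonce `nonce` and the random tape `T` (for `Rand`); the output `none` is the
error `⊥`. -/
def dsend (A : DAEAD) (k : A.Key) (nonce : Bytes) (T : ℕ → Byte)
    (m : DMsg) (p : ℤ) : Option Bytes :=
  match m with
  | none =>
    if p < 0 then some (A.Enc k nonce [b0])
    else if p < (lNull A : ℤ) then some (rand T p.toNat)
    else if p ≤ (lOut : ℤ) then
      some (A.Enc k nonce (b0 :: List.replicate (p.toNat - lNull A) b0))
    else none
  | some msg =>
    if p < 0 then
      if msg.length ≤ lIn A then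
        some (A.Enc k nonce (b1 :: (enc2 msg.length ++ msg)))
      else none
    else if (lOut : ℤ) < p ∨ p - (A.lOver : ℤ) - 3 < (msg.length : ℤ) then none
    else
      some (A.Enc k nonce
        (b1 :: (enc2 msg.length ++
          List.replicate (p.toNat - msg.length - A.lOver - 3) b0 ++ msg)))

/-- `Recv(k, c)` of the datagram FEP construction. -/
def drecv (A : DAEAD) (k : A.Key) (c : Bytes) : DOut :=
  if c.length < lNull A then DOut.top
  else
    match A.Dec k c with
    | none => DOut.bot
    | some buf =>
      if buf.headD b0 = b0 then DOut.top
      else DOut.msg (buf.drop (buf.length - dec2 (buf.drop 1)))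

lemma dec2_enc2 (n : ℕ) (hn : n < 65536) (rest : Bytes) :
    dec2 (enc2 n ++ rest) = n := by
  have h1 : n / 256 < 256 := Nat.div_lt_of_lt_mul (by omega)
  simp only [enc2, dec2, byte, List.cons_append, List.nil_append]
  simp only [Nat.mod_eq_of_lt h1]
  omega

lemma drecv_enc (A : DAEAD) (k : A.Key) (nonce : Bytes) (hn : nonce.length = A.lNonce)
    (buf : Bytes) (hb : 1 ≤ buf.length) :
    drecv A k (A.Enc k nonce buf) =
      (if buf.headD b0 = b0 then DOut.top
       else DOut.msg (buf.drop (buf.length - dec2 (buf.drop 1)))) := by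
  have hlen := A.lenAdd k nonce buf hn
  have : ¬ (A.Enc k nonce buf).length < lNull A := by
    rw [hlen]; unfold lNull DAEAD.lOver; omega
  rw [drecv, if_neg this, A.correct k nonce buf hn]

/-- The datagram FEP construction satisfies Message Delivery:
for every key `k`, every message `m ∈ M_ℓin ∪ {⊤}`, every integer `p`, and
every choice of the random nonce and random bytes used by `Send`, if
`Send(k, m, p)` outputs a ciphertext `c ≠ ⊥`, then `Recv(k, c)` outputs
exactly `m` (and, since the construction is stateless, every subsequent `Recv`
call on `c` also outputs `m`). -/
theorem stmt10 (A : DAEAD) (k : A.Key) (nonce : Bytes) (T : ℕ → Byte)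
    (hn : nonce.length = A.lNonce)
    (m : DMsg) (hm : ∀ msg : Bytes, m = some msg → msg.length ≤ lIn A)
    (p : ℤ) (c : Bytes)
    (h : dsend A k nonce T m p = some c) :
    drecv A k c = (match m with | none => DOut.top | some msg => DOut.msg msg) := by
  cases m with
  | none =>
    simp only [dsend] at h
    split_ifs at h with h1 h2 h3
    · cases h
      rw [drecv_enc A k nonce hn [b0] (by simp)]
      simp
    · cases h
      have hlt : (rand T p.toNat).length < lNull A := by
        simp only [rand, List.length_map, List.length_range]
        omega
      rw [drecv, if_pos hlt]
    · cases h
      rw [drecv_enc A k nonce hn _ (by simp)]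
      simp
  | some msg =>
    have hlin : msg.length ≤ lIn A := hm msg rfl
    have hlt : msg.length < 65536 := by
      have : lIn A ≤ lOut := by unfold lIn; omega
      unfold lOut at this; omega
    simp only [dsend] at h
    split_ifs at h with h1 h2
    · cases h
      rw [drecv_enc A k nonce hn _ (by simp)]
      have hd : (b1 :: (enc2 msg.length ++ msg)).headD b0 ≠ b0 := by
        simp [b1, b0, byte, Fin.ext_iff]
      rw [if_neg hd]
      simp only [List.drop_succ_cons, List.drop_zero, dec2_enc2 _ hlt]
      congr 1
      have hre : b1 :: (enc2 msg.length ++ msg) = (b1 :: enc2 msg.length) ++ msg := rfl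
      have hpl : (b1 :: enc2 msg.length).length = 3 := by simp [enc2]
      rw [hre, List.length_append, hpl,
        show 3 + msg.length - msg.length = (b1 :: enc2 msg.length).length from by
          rw [hpl]; omega]
      exact List.drop_left
    · cases h
      rw [drecv_enc A k nonce hn _ (by simp)]
      have hd : (b1 :: (enc2 msg.length ++
          List.replicate (p.toNat - msg.length - A.lOver - 3) b0 ++ msg)).headD b0 ≠ b0 := by
        simp [b1, b0, byte, Fin.ext_iff]
      rw [if_neg hd]
      simp only [List.drop_succ_cons, List.drop_zero, List.append_assoc,
        dec2_enc2 _ hlt]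
      congr 1
      set q := p.toNat - msg.length - A.lOver - 3 with hq
      have hre : b1 :: (enc2 msg.length ++ (List.replicate q b0 ++ msg))
          = (b1 :: (enc2 msg.length ++ List.replicate q b0)) ++ msg := by simp
      have hpl : (b1 :: (enc2 msg.length ++ List.replicate q b0)).length = 3 + q := by
        simp [enc2]; omega
      rw [hre, List.length_append, hpl,
        show 3 + q + msg.length - msg.length
            = (b1 :: (enc2 msg.length ++ List.replicate q b0)).length from by
          rw [hpl]; omega]
      exact List.drop_left
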